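/- Let a, b ∈ (0,1) with a ≥ 1-b and a(1-a) ≤ b(1-b), and let γ = 2^{(H(b)-H(a))/(a+b-1)} where H is the binary entropy function. Then γ·( (1-a) + b ) ≥ 2(1-b), i.e., γ(ā+b)/(2b̄) ≥ 1 where ā = 1-a, b̄ = 1-b. -/

import Mathlib

/-- The binary entropy function `H(x) = -x·log₂ x - (1-x)·log₂(1-x)`. -/
noncomputable def binEnt (x : ℝ) : ℝ := -x * Real.logb 2 x - (1 - x) * Real.logb 2 (1 - x)

/-!
Put `p = 1 - b`, so that `H(b) = H(p)`, `p ≤ a` and `(1-a) + b = 2 - a - p`. Taking logarithms,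
the claim becomes `(a - p) log (2p / (2 - a - p)) ≤ H(p) - H(a)` in natural units. The difference
of the two sides splits into `a log (a/p) - (a - p) ≥ 0` and
`(v - u)(1 + log ((u+v)/2)) - (v log v - u log u) ≥ 0` for `u = 1 - a ≤ v = 1 - p`: the slope of
the secant of `t log t` over `[u, v]` is at most its derivative `1 + log t` at the midpoint,
because that derivative is concave.
-/

open Real

lemma sub_le_mul_log_div {x p : ℝ} (hx : 0 < x) (hp : 0 < p) : x - p ≤ x * log (x / p) := by
  have hlog := log_le_sub_one_of_pos (div_pos hp hx)
  rw [log_div hp.ne' hx.ne'] at hlog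
  rw [log_div hx.ne' hp.ne']
  have : x * (p / x - 1) = p - x := by field_simp
  nlinarith

lemma mul_log_sub_mul_log_le {u v : ℝ} (hu : 0 < u) (huv : u ≤ v) :
    v * log v - u * log u ≤ (v - u) * (1 + log ((u + v) / 2)) := by
  set f : ℝ → ℝ := fun x => (x - u) * (1 + log ((u + x) / 2)) - x * log x
  set f' : ℝ → ℝ := fun x => log ((u + x) / 2) - log x + (x - u) / (u + x)
  have hderiv : ∀ x ∈ Set.Ici u, HasDerivAt f (f' x) x := by
    intro x hx
    have hx0 : 0 < x := hu.trans_le hx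
    have hmid : HasDerivAt (fun x => log ((u + x) / 2)) ((1 / 2) / ((u + x) / 2)) x :=
      (((hasDerivAt_id x).const_add u).div_const 2).log (by positivity)
    have hf : HasDerivAt f
        (1 * (1 + log ((u + x) / 2)) + (x - u) * (1 / 2 / ((u + x) / 2)) - (log x + 1)) x :=
      (((hasDerivAt_id' x).sub_const u).mul (hmid.const_add 1)).sub (hasDerivAt_mul_log hx0.ne')
    convert hf using 1
    have : u + x ≠ 0 := by positivity
    simp only [f']
    field_simp
    ring
  have hf'_nonneg : ∀ x ∈ Set.Ioi u, 0 ≤ f' x := by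
    intro x hx
    have hx0 : 0 < x := hu.trans hx
    have hlog := log_le_sub_one_of_pos (x := x / ((u + x) / 2)) (by positivity)
    rw [log_div hx0.ne' (by positivity)] at hlog
    have : x / ((u + x) / 2) - 1 = (x - u) / (u + x) := by field_simp; ring
    simp only [f']
    linarith
  have hmono : MonotoneOn f (Set.Ici u) :=
    monotoneOn_of_hasDerivWithinAt_nonneg (f' := f') (convex_Ici u)
      (fun x hx => (hderiv x hx).continuousAt.continuousWithinAt)
      (by rw [interior_Ici]; exact fun x hx => (hderiv x (Set.mem_Ici.2 hx.le)).hasDerivWithinAt)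
      (by rw [interior_Ici]; exact hf'_nonneg)
  have := hmono Set.self_mem_Ici huv huv
  simp only [f, sub_self, zero_mul, zero_sub] at this
  linarith

lemma mul_log_div_le_binEntropy_sub {p a : ℝ} (hp : 0 < p) (hpa : p ≤ a) (ha : a < 1) :
    (a - p) * log (2 * p / (2 - a - p)) ≤ binEntropy p - binEntropy a := by
  have h1 := sub_le_mul_log_div (hp.trans_le hpa) hp
  have h2 := mul_log_sub_mul_log_le (sub_pos.2 ha) (sub_le_sub_left hpa 1)
  rw [show (1 - a + (1 - p)) / 2 = (2 - a - p) / 2 by ring,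
    log_div (by linarith) two_ne_zero] at h2
  rw [log_div (by linarith) hp.ne'] at h1
  rw [log_div (by positivity) (by linarith), log_mul two_ne_zero hp.ne']
  simp only [binEntropy, log_inv]
  nlinarith

lemma binEnt_eq_binEntropy_div_log_two (x : ℝ) : binEnt x = binEntropy x / log 2 := by
  simp only [binEnt, binEntropy, logb, log_inv]
  ring

theorem stmt_18_general (a b : ℝ) (ha : a ∈ Set.Ioo (0 : ℝ) 1) (hb : b ∈ Set.Ioo (0 : ℝ) 1)
    (h1 : 1 - b ≤ a) (hne : a + b ≠ 1)
    (γ : ℝ) (hγ : γ = (2 : ℝ) ^ ((binEnt b - binEnt a) / (a + b - 1))) :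
    2 * (1 - b) ≤ γ * ((1 - a) + b) ∧ 1 ≤ γ * ((1 - a) + b) / (2 * (1 - b)) := by
  obtain ⟨-, ha1⟩ := ha
  obtain ⟨hb0, hb1⟩ := hb
  have hs : 0 < a + b - 1 := sub_pos.2 (lt_of_le_of_ne (by linarith) (Ne.symm hne))
  have hkey : (a + b - 1) * log (2 * (1 - b) / ((1 - a) + b)) ≤ binEntropy b - binEntropy a := by
    have := mul_log_div_le_binEntropy_sub (sub_pos.2 hb1) h1 ha1
    rwa [binEntropy_one_sub, show a - (1 - b) = a + b - 1 by ring,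
      show 2 - a - (1 - b) = (1 - a) + b by ring] at this
  have hγ_exp : γ = exp ((binEntropy b - binEntropy a) / (a + b - 1)) := by
    rw [hγ, rpow_def_of_pos two_pos, binEnt_eq_binEntropy_div_log_two,
      binEnt_eq_binEntropy_div_log_two]
    congr 1
    field_simp
  have hbound : 2 * (1 - b) / ((1 - a) + b) ≤ γ := by
    rw [hγ_exp, ← log_le_iff_le_exp (by positivity), le_div_iff₀ hs]
    linarith
  have hmain : 2 * (1 - b) ≤ γ * ((1 - a) + b) := (div_le_iff₀ (by linarith)).1 hbound
  exact ⟨hmain, (one_le_div (by linarith)).2 hmain⟩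

/-- For `a, b ∈ (0,1)` with `a ≥ 1-b` (and `a + b ≠ 1`, so that `γ` is well defined),
`a(1-a) ≤ b(1-b)`, and `γ = 2^((H(b)-H(a))/(a+b-1))`, we have `γ·((1-a)+b) ≥ 2(1-b)`,
i.e. `γ(ā+b)/(2·b̄) ≥ 1`. -/
theorem stmt_18 (a b : ℝ) (ha : a ∈ Set.Ioo (0 : ℝ) 1) (hb : b ∈ Set.Ioo (0 : ℝ) 1)
    (h1 : 1 - b ≤ a) (hne : a + b ≠ 1) (h2 : a * (1 - a) ≤ b * (1 - b))
    (γ : ℝ) (hγ : γ = (2 : ℝ) ^ ((binEnt b - binEnt a) / (a + b - 1))) :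
    2 * (1 - b) ≤ γ * ((1 - a) + b) ∧ 1 ≤ γ * ((1 - a) + b) / (2 * (1 - b)) :=
  stmt_18_general a b ha hb h1 hne γ hγ
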